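/- Let a, b ∈ ℝ and let k : ℝ³ → ℝ be the function k(x) = 1 + (3x₁² − 2x₂² − x₃²)/(1+|x|²)² + (|x|⁴/(1+|x|²)³)(b − a/(1+|x|²) − (1−a)/(1+|x|²)²). Then (15/(8π)) ∫_{∂B₁(0)} (D²k(0)(x,x))² dσ(x) = 56, and consequently a₂ := k(0)·(Δ²k(0) + ∇(Δk)(0) · (D²k(0))^{−1} ∇(Δk)(0)) − (15/(8π)) ∫_{∂B₁(0)} (D²k(0)(x,x))² dσ(x) = 120(b − 1) − 56. -/

import Mathlib

open MeasureTheory Real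

/-- The Euclidean Laplacian: sum of second partial derivatives. -/
noncomputable def lap (u : EuclideanSpace ℝ (Fin 3) → ℝ) (x : EuclideanSpace ℝ (Fin 3)) : ℝ :=
  ∑ i : Fin 3,
    fderiv ℝ (fun z => fderiv ℝ u z (EuclideanSpace.single i 1)) x (EuclideanSpace.single i 1)

/-- The surface measure on the unit sphere of `ℝ³`. -/
noncomputable def sphereMeasure :
    Measure (Metric.sphere (0 : EuclideanSpace ℝ (Fin 3)) 1) :=
  (volume : Measure (EuclideanSpace ℝ (Fin 3))).toSphere

/-- The function `k` from the example in the paper. -/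
noncomputable def kfun (a b : ℝ) (x : EuclideanSpace ℝ (Fin 3)) : ℝ :=
  1 + (3 * x 0 ^ 2 - 2 * x 1 ^ 2 - x 2 ^ 2) / (1 + ‖x‖ ^ 2) ^ 2 +
    ‖x‖ ^ 4 / (1 + ‖x‖ ^ 2) ^ 3 *
      (b - a / (1 + ‖x‖ ^ 2) - (1 - a) / (1 + ‖x‖ ^ 2) ^ 2)

section Aux

open Set

noncomputable section

abbrev EE := EuclideanSpace ℝ (Fin 3)

/-- Symbolic polynomial expressions in 3 variables with real coefficients. -/
inductive PE where
  | zero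
  | one
  | const (c : ℝ)
  | coord (i : Fin 3)
  | add (p q : PE)
  | mul (p q : PE)

namespace PE

noncomputable def eval : PE → EE → ℝ
  | zero, _ => 0
  | one, _ => 1
  | const c, _ => c
  | coord i, x => x i
  | add p q, x => eval p x + eval q x
  | mul p q, x => eval p x * eval q x

def addS : PE → PE → PE
  | zero, q => q
  | p, zero => p
  | p, q => add p q

def mulS : PE → PE → PE
  | zero, _ => zero
  | _, zero => zero
  | one, q => q
  | p, one => p
  | p, q => mul p q

@[simp] lemma eval_addS (p q : PE) (x : EE) : eval (addS p q) x = eval p x + eval q x := by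
  cases p <;> cases q <;> simp [addS, eval]

@[simp] lemma eval_mulS (p q : PE) (x : EE) : eval (mulS p q) x = eval p x * eval q x := by
  cases p <;> cases q <;> simp [mulS, eval]

/-- symbolic partial derivative -/
def pd (i : Fin 3) : PE → PE
  | zero => zero
  | one => zero
  | const _ => zero
  | coord j => if j = i then one else zero
  | add p q => addS (pd i p) (pd i q)
  | mul p q => addS (mulS (pd i p) q) (mulS p (pd i q))

@[simp] lemma eval_pd_coord (i j : Fin 3) (x : EE) :
    eval (pd i (coord j)) x = if j = i then 1 else 0 := by
  by_cases h : j = i <;> simp [pd, h, eval]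

/-- the total derivative of `eval p` at `z`, as a CLM -/
noncomputable def L (p : PE) (z : EE) : EE →L[ℝ] ℝ :=
  eval (pd 0 p) z • EuclideanSpace.proj 0 + eval (pd 1 p) z • EuclideanSpace.proj 1
    + eval (pd 2 p) z • EuclideanSpace.proj 2

lemma L_apply (p : PE) (z v : EE) :
    L p z v = eval (pd 0 p) z * v 0 + eval (pd 1 p) z * v 1 + eval (pd 2 p) z * v 2 := by
  simp [L, smul_eq_mul]

lemma hasFDerivAt (p : PE) (z : EE) : HasFDerivAt (eval p) (L p z) z := by
  induction p with
  | zero =>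
      have : L zero z = 0 := by ext v; simp [L_apply, eval, pd]
      rw [this]; exact hasFDerivAt_const 0 z
  | one =>
      have : L one z = 0 := by ext v; simp [L_apply, eval, pd]
      rw [this]; exact hasFDerivAt_const 1 z
  | const c =>
      have : L (const c) z = 0 := by ext v; simp [L_apply, eval, pd]
      rw [this]; exact hasFDerivAt_const c z
  | coord i =>
      have : L (coord i) z = EuclideanSpace.proj i := by
        ext v
        simp only [L_apply, eval, eval_pd_coord]
        fin_cases i <;> simp
      rw [this]
      exact (EuclideanSpace.proj (𝕜 := ℝ) i).hasFDerivAt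
  | add p q hp hq =>
      have : L (add p q) z = L p z + L q z := by
        ext v; simp [L_apply, eval, pd]; ring
      rw [this]; exact hp.add hq
  | mul p q hp hq =>
      have : L (mul p q) z = eval p z • L q z + eval q z • L p z := by
        ext v; simp [L_apply, eval, pd, smul_eq_mul]; ring
      rw [this]; exact hp.mul hq

lemma differentiableAt (p : PE) (z : EE) : DifferentiableAt ℝ (eval p) z :=
  (p.hasFDerivAt z).differentiableAt

lemma contDiff (p : PE) : ContDiff ℝ (⊤ : ℕ∞) (eval p) := by
  induction p with
  | zero => exact contDiff_const
  | one => exact contDiff_const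
  | const c => exact contDiff_const
  | coord i => exact (EuclideanSpace.proj (𝕜 := ℝ) i).contDiff
  | add p q hp hq => exact hp.add hq
  | mul p q hp hq => exact hp.mul hq

lemma fderiv_apply (p : PE) (z v : EE) :
    fderiv ℝ (eval p) z v = eval (pd 0 p) z * v 0 + eval (pd 1 p) z * v 1
      + eval (pd 2 p) z * v 2 := by
  rw [(p.hasFDerivAt z).fderiv, L_apply]

/-- symbolic directional derivative with fixed coefficients -/
def dirD (v : EE) (p : PE) : PE :=
  addS (addS (mulS (const (v 0)) (pd 0 p)) (mulS (const (v 1)) (pd 1 p)))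
    (mulS (const (v 2)) (pd 2 p))

lemma fderiv_eq_dirD (p : PE) (v : EE) :
    (fun z => fderiv ℝ (eval p) z v) = eval (dirD v p) := by
  funext z
  rw [fderiv_apply]
  simp [dirD, eval]
  ring

lemma fderiv_pd_single (p : PE) (i : Fin 3) :
    (fun z => fderiv ℝ (eval p) z (EuclideanSpace.single i (1:ℝ))) = eval (pd i p) := by
  funext z
  rw [fderiv_apply]
  fin_cases i <;> simp [EuclideanSpace.single_apply]

lemma fderiv_pd_single' (p : PE) (i : Fin 3) (z : EE) :
    fderiv ℝ (eval p) z (EuclideanSpace.single i (1:ℝ)) = eval (pd i p) z :=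
  congrFun (fderiv_pd_single p i) z

lemma fderiv_dirD (p : PE) (v z : EE) :
    fderiv ℝ (eval p) z v = eval (dirD v p) z :=
  congrFun (fderiv_eq_dirD p v) z

end PE

lemma contDiff_pd {f : EE → ℝ} (hf : ContDiff ℝ (⊤ : ℕ∞) f) (v : EE) :
    ContDiff ℝ (⊤ : ℕ∞) (fun x => fderiv ℝ f x v) :=
  (hf.fderiv_right ((by simp))).clm_apply contDiff_const

/-- `Jv n f` : `f` is a sum of products of `n` coordinate functions times smooth functions. -/
inductive Jv : ℕ → (EE → ℝ) → Prop where
  | smooth {g} (hg : ContDiff ℝ (⊤ : ℕ∞) g) : Jv 0 g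
  | coord {n g} (i : Fin 3) (hg : Jv n g) : Jv (n + 1) (fun x => x i * g x)
  | add {n f g} (hf : Jv n f) (hg : Jv n g) : Jv n (fun x => f x + g x)
  | smul {n f} (c : ℝ) (hf : Jv n f) : Jv n (fun x => c * f x)
  | congr {n f g} (hf : Jv n f) (h : ∀ x, g x = f x) : Jv n g

namespace Jv

lemma contDiff {n f} (hf : Jv n f) : ContDiff ℝ (⊤ : ℕ∞) f := by
  induction hf with
  | smooth hg => exact hg
  | coord i hg ih => exact ((EuclideanSpace.proj (𝕜 := ℝ) i).contDiff).mul ih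
  | add hf hg ihf ihg => exact ihf.add ihg
  | smul c hf ih => exact contDiff_const.mul ih
  | congr hf h ih => exact funext h ▸ ih

lemma eval_zero {n f} (hf : Jv n f) (hn : n ≠ 0) : f 0 = 0 := by
  induction hf with
  | smooth hg => exact absurd rfl hn
  | @coord n g i hg ih => simp
  | add hf hg ihf ihg => simp [ihf hn, ihg hn]
  | smul c hf ih => simp [ih hn]
  | congr hf h ih => rw [h 0]; exact ih hn

lemma pd {n f} (hf : Jv n f) (v : EE) : Jv (n - 1) (fun x => fderiv ℝ f x v) := by
  induction hf with
  | smooth hg => exact smooth (contDiff_pd hg v)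
  | @coord n g i hg ih =>
      have hgd : ∀ x, DifferentiableAt ℝ g x := fun x => (hg.contDiff.differentiable (by simp)) x
      have hcd : ∀ x : EE, DifferentiableAt ℝ (fun y : EE => y i) x := fun x =>
        (EuclideanSpace.proj (𝕜 := ℝ) i).differentiableAt
      have key : ∀ x, fderiv ℝ (fun y => y i * g y) x v
          = v i * g x + x i * fderiv ℝ g x v := by
        intro x
        rw [fderiv_fun_mul (hcd x) (hgd x)]
        have : fderiv ℝ (fun y : EE => y i) x = EuclideanSpace.proj (𝕜 := ℝ) i :=
          (EuclideanSpace.proj (𝕜 := ℝ) i).fderiv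
        simp [this, smul_eq_mul]
        ring
      refine congr ?_ key
      simp only [Nat.add_sub_cancel]
      match n with
      | 0 =>
          exact add (smul (v i) hg)
            (smooth (((EuclideanSpace.proj (𝕜 := ℝ) i).contDiff).mul (contDiff_pd hg.contDiff v)))
      | m + 1 =>
          exact add (smul (v i) hg) (coord i (by simpa using ih))
  | @add n f g hf hg ihf ihg =>
      refine congr (add ihf ihg) ?_
      intro x
      rw [fderiv_fun_add (hf.contDiff.differentiable (by simp) x) (hg.contDiff.differentiable (by simp) x)]
      rfl
  | @smul n f c hf ih =>
      refine congr (smul c ih) ?_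
      intro x
      rw [fderiv_const_mul (hf.contDiff.differentiable (by simp) x)]
      rfl
  | congr hf h ih =>
      have : _ = _ := funext h
      subst this
      exact ih

end Jv

noncomputable def gfun (a b c : ℝ) : EE → ℝ := fun x =>
  (c * (3 + 2 * ‖x‖ ^ 2) * (1 + ‖x‖ ^ 2) ^ 3 +
    ((5 - 3 * b - a) + (10 - 9 * b) * ‖x‖ ^ 2 - 10 * (b - 1) * (‖x‖ ^ 2) ^ 2
      - 5 * (b - 1) * (‖x‖ ^ 2) ^ 3 - (b - 1) * (‖x‖ ^ 2) ^ 4))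
  / (1 + ‖x‖ ^ 2) ^ 5

noncomputable def Wf (a b : ℝ) : EE → ℝ := fun x =>
  x 0 * (x 0 * gfun a b 3 x) + x 1 * (x 1 * gfun a b (-2) x) + x 2 * (x 2 * gfun a b (-1) x)

noncomputable def Er (a b : ℝ) : EE → ℝ := fun x => ‖x‖ ^ 2 * (‖x‖ ^ 2 * Wf a b x)

lemma norm_sq_eq (x : EE) : ‖x‖ ^ 2 = x 0 * x 0 + x 1 * x 1 + x 2 * x 2 := by
  rw [EuclideanSpace.norm_eq, Real.sq_sqrt (by positivity)]
  simp [Fin.sum_univ_three, Real.norm_eq_abs, sq_abs]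
  ring

def sqE : PE := .add (.add (.mul (.coord 0) (.coord 0)) (.mul (.coord 1) (.coord 1)))
  (.mul (.coord 2) (.coord 2))

def QE : PE := .add (.add (.mul (.const 3) (.mul (.coord 0) (.coord 0)))
    (.mul (.const (-2)) (.mul (.coord 1) (.coord 1))))
  (.mul (.const (-1)) (.mul (.coord 2) (.coord 2)))

noncomputable def Pexpr (b : ℝ) : PE :=
  .add (.add (.add .one QE) (.mul (.const (-2)) (.mul QE sqE)))
    (.mul (.const (b - 1)) (.mul sqE sqE))

lemma gfun_contDiff (a b c : ℝ) : ContDiff ℝ (⊤ : ℕ∞) (gfun a b c) := by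
  have h : ContDiff ℝ (⊤ : ℕ∞) (fun x : EE => ‖x‖ ^ 2) := contDiff_norm_sq ℝ
  apply ContDiff.div
  · exact ((contDiff_const.mul (contDiff_const.add (contDiff_const.mul h))).mul
      ((contDiff_const.add h).pow 3)).add
      ((((contDiff_const.add (contDiff_const.mul h)).sub
        (contDiff_const.mul (h.pow 2))).sub (contDiff_const.mul (h.pow 3))).sub
        (contDiff_const.mul (h.pow 4)))
  · exact (contDiff_const.add h).pow 5
  · intro x; positivity


lemma kfun_decomp (a b : ℝ) (x : EE) :
    kfun a b x = PE.eval (Pexpr b) x + Er a b x := by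
  have h4 : ‖x‖ ^ 4 = (‖x‖ ^ 2) ^ 2 := by ring
  have hpos : (0:ℝ) < 1 + ‖x‖ ^ 2 := by positivity
  unfold kfun Er Wf gfun Pexpr QE sqE
  simp only [PE.eval, h4]
  rw [norm_sq_eq]
  have hne : (1 + (x 0 * x 0 + x 1 * x 1 + x 2 * x 2)) ≠ 0 := by
    rw [← norm_sq_eq]; positivity
  field_simp
  ring


section Main
variable (a b : ℝ)

abbrev sing (i : Fin 3) : EE := EuclideanSpace.single i (1:ℝ)

lemma Jv_W : Jv 2 (Wf a b) := by
  unfold Wf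
  exact Jv.add (Jv.add (Jv.coord 0 (Jv.coord 0 (Jv.smooth (gfun_contDiff a b 3))))
      (Jv.coord 1 (Jv.coord 1 (Jv.smooth (gfun_contDiff a b (-2))))))
    (Jv.coord 2 (Jv.coord 2 (Jv.smooth (gfun_contDiff a b (-1)))))

lemma Jv_mul_nsq {n : ℕ} {f : EE → ℝ} (hf : Jv n f) :
    Jv (n + 2) (fun x => ‖x‖ ^ 2 * f x) := by
  refine Jv.congr (Jv.add (Jv.add (Jv.coord 0 (Jv.coord 0 hf)) (Jv.coord 1 (Jv.coord 1 hf)))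
    (Jv.coord 2 (Jv.coord 2 hf))) ?_
  intro x; rw [norm_sq_eq]; ring

lemma Jv_Er : Jv 6 (Er a b) := by
  have h := Jv_mul_nsq (Jv_mul_nsq (Jv_W a b))
  unfold Er
  exact h

lemma kfun_eq_fun : kfun a b = fun x => PE.eval (Pexpr b) x + Er a b x :=
  funext (kfun_decomp a b)

lemma kfun_contDiff : ContDiff ℝ (⊤ : ℕ∞) (kfun a b) := by
  rw [kfun_eq_fun]; exact (PE.contDiff _).add (Jv_Er a b).contDiff

lemma pd_fun_add {f g : EE → ℝ} (hf : ContDiff ℝ (⊤ : ℕ∞) f) (hg : ContDiff ℝ (⊤ : ℕ∞) g) (v : EE) :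
    (fun y => fderiv ℝ (fun w => f w + g w) y v) = fun y => fderiv ℝ f y v + fderiv ℝ g y v := by
  funext y
  rw [fderiv_fun_add (hf.differentiable (by simp) y) (hg.differentiable (by simp) y)]
  rfl

lemma pd_split (p : PE) {g : EE → ℝ} (hg : ContDiff ℝ (⊤ : ℕ∞) g) (v : EE) :
    (fun y => fderiv ℝ (fun w => PE.eval p w + g w) y v)
      = fun y => PE.eval (PE.dirD v p) y + fderiv ℝ g y v := by
  rw [pd_fun_add (PE.contDiff p) hg v]
  simp only [PE.fderiv_dirD]

lemma second_split (p : PE) {g : EE → ℝ} (hg : ContDiff ℝ (⊤ : ℕ∞) g) (v w z : EE) :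
    fderiv ℝ (fun y => fderiv ℝ (fun t => PE.eval p t + g t) y v) z w
      = PE.eval (PE.dirD w (PE.dirD v p)) z + fderiv ℝ (fun y => fderiv ℝ g y v) z w := by
  rw [pd_split p hg v]
  rw [fderiv_fun_add (PE.differentiableAt _ z) ((contDiff_pd hg v).differentiable (by simp) z)]
  have h1 : fderiv ℝ (PE.eval (PE.dirD v p)) z w = PE.eval (PE.dirD w (PE.dirD v p)) z :=
    congrFun (PE.fderiv_eq_dirD (PE.dirD v p) w) z
  simp only [ContinuousLinearMap.add_apply, h1]

lemma pd_split_sing (p : PE) {g : EE → ℝ} (hg : ContDiff ℝ (⊤ : ℕ∞) g) (i : Fin 3) :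
    (fun y => fderiv ℝ (fun w => PE.eval p w + g w) y (sing i))
      = fun y => PE.eval (PE.pd i p) y + fderiv ℝ g y (sing i) := by
  rw [pd_fun_add (PE.contDiff p) hg (sing i)]
  simp only [PE.fderiv_pd_single']

lemma second_split_sing (p : PE) {g : EE → ℝ} (hg : ContDiff ℝ (⊤ : ℕ∞) g) (i j : Fin 3) (z : EE) :
    fderiv ℝ (fun y => fderiv ℝ (fun t => PE.eval p t + g t) y (sing i)) z (sing j)
      = PE.eval (PE.pd j (PE.pd i p)) z
        + fderiv ℝ (fun y => fderiv ℝ g y (sing i)) z (sing j) := by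
  rw [pd_split_sing p hg i]
  rw [fderiv_fun_add (PE.differentiableAt _ z)
    ((contDiff_pd hg (sing i)).differentiable (by simp) z)]
  simp only [ContinuousLinearMap.add_apply, PE.fderiv_pd_single']

noncomputable def lapPE (b : ℝ) : PE :=
  .add (.add (PE.pd 0 (PE.pd 0 (Pexpr b))) (PE.pd 1 (PE.pd 1 (Pexpr b))))
    (PE.pd 2 (PE.pd 2 (Pexpr b)))

noncomputable def lapEr (a b : ℝ) : EE → ℝ := fun z =>
  (fderiv ℝ (fun y => fderiv ℝ (Er a b) y (sing 0)) z (sing 0)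
    + fderiv ℝ (fun y => fderiv ℝ (Er a b) y (sing 1)) z (sing 1))
  + fderiv ℝ (fun y => fderiv ℝ (Er a b) y (sing 2)) z (sing 2)

lemma Jv_lapEr : Jv 4 (lapEr a b) := by
  have h : ∀ i : Fin 3,
      Jv 4 (fun z => fderiv ℝ (fun y => fderiv ℝ (Er a b) y (sing i)) z (sing i)) := by
    intro i
    have h5 := (Jv_Er a b).pd (sing i)
    have h4 := h5.pd (sing i)
    simpa using h4
  unfold lapEr
  exact Jv.add (Jv.add (h 0) (h 1)) (h 2)

lemma lap_eq (u : EE → ℝ) (z : EE) :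
    lap u z = (fderiv ℝ (fun y => fderiv ℝ u y (sing 0)) z (sing 0)
      + fderiv ℝ (fun y => fderiv ℝ u y (sing 1)) z (sing 1))
      + fderiv ℝ (fun y => fderiv ℝ u y (sing 2)) z (sing 2) := by
  simp [lap, Fin.sum_univ_three, sing]

lemma lap_kfun : lap (kfun a b) = fun z => PE.eval (lapPE b) z + lapEr a b z := by
  funext z
  rw [lap_eq, kfun_eq_fun a b]
  rw [pd_split_sing (Pexpr b) (Jv_Er a b).contDiff 0,
      pd_split_sing (Pexpr b) (Jv_Er a b).contDiff 1,
      pd_split_sing (Pexpr b) (Jv_Er a b).contDiff 2]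
  rw [fderiv_fun_add (PE.differentiableAt _ z)
      ((contDiff_pd (Jv_Er a b).contDiff (sing 0)).differentiable (by simp) z),
    fderiv_fun_add (PE.differentiableAt _ z)
      ((contDiff_pd (Jv_Er a b).contDiff (sing 1)).differentiable (by simp) z),
    fderiv_fun_add (PE.differentiableAt _ z)
      ((contDiff_pd (Jv_Er a b).contDiff (sing 2)).differentiable (by simp) z)]
  simp only [ContinuousLinearMap.add_apply, PE.fderiv_pd_single']
  simp only [lapPE, lapEr, PE.eval]
  ring

lemma fderiv_lap_kfun_zero : fderiv ℝ (lap (kfun a b)) 0 = 0 := by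
  rw [lap_kfun a b]
  ext v
  rw [fderiv_fun_add (PE.differentiableAt _ 0) ((Jv_lapEr a b).contDiff.differentiable (by simp) 0)]
  have h2 : fderiv ℝ (lapEr a b) 0 v = 0 := by
    have h3 := (Jv_lapEr a b).pd v
    simpa using h3.eval_zero (by norm_num)
  simp only [ContinuousLinearMap.add_apply, ContinuousLinearMap.zero_apply, h2, add_zero,
    PE.fderiv_dirD]
  simp [lapPE, Pexpr, QE, sqE, PE.dirD, PE.pd, PE.addS, PE.mulS, PE.eval,
    EuclideanSpace.single_apply]

lemma lap_lap_kfun_zero : lap (lap (kfun a b)) 0 = 120 * (b - 1) := by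
  rw [lap_eq, lap_kfun a b]
  rw [second_split_sing (lapPE b) (Jv_lapEr a b).contDiff 0 0 0,
      second_split_sing (lapPE b) (Jv_lapEr a b).contDiff 1 1 0,
      second_split_sing (lapPE b) (Jv_lapEr a b).contDiff 2 2 0]
  have hz : ∀ i : Fin 3,
      fderiv ℝ (fun y => fderiv ℝ (lapEr a b) y (sing i)) 0 (sing i) = 0 := by
    intro i
    have h3 := ((Jv_lapEr a b).pd (sing i)).pd (sing i)
    simpa using h3.eval_zero (by norm_num)
  rw [hz 0, hz 1, hz 2]
  simp [lapPE, Pexpr, QE, sqE, PE.pd, PE.addS, PE.mulS, PE.eval]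
  ring

lemma iFD2_kfun (x : EE) :
    iteratedFDeriv ℝ 2 (kfun a b) 0 (fun _ => x) = 6 * x 0 ^ 2 - 4 * x 1 ^ 2 - 2 * x 2 ^ 2 := by
  rw [iteratedFDeriv_two_apply]
  have hdiff : DifferentiableAt ℝ (fderiv ℝ (kfun a b)) 0 :=
    ((kfun_contDiff a b).fderiv_right (m := 1) (by exact WithTop.coe_le_coe.mpr le_top)).differentiable one_ne_zero 0
  have hb : fderiv ℝ (fun y => fderiv ℝ (kfun a b) y x) 0
      = (fderiv ℝ (fderiv ℝ (kfun a b)) 0).flip x := by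
    have h := fderiv_clm_apply (c := fderiv ℝ (kfun a b)) (u := fun _ => x) hdiff
      (differentiableAt_const x)
    simpa using h
  have hmain : fderiv ℝ (fderiv ℝ (kfun a b)) 0 x x
      = fderiv ℝ (fun y => fderiv ℝ (kfun a b) y x) 0 x := by
    rw [hb]; rfl
  show fderiv ℝ (fderiv ℝ (kfun a b)) 0 x x = _
  rw [hmain, kfun_eq_fun a b, second_split (Pexpr b) (Jv_Er a b).contDiff x x 0]
  have h0 : fderiv ℝ (fun y => fderiv ℝ (Er a b) y x) 0 x = 0 := by
    have h3 := ((Jv_Er a b).pd x).pd x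
    simpa using h3.eval_zero (by norm_num)
  rw [h0, add_zero]
  simp [Pexpr, QE, sqE, PE.dirD, PE.pd, PE.addS, PE.mulS, PE.eval]
  ring

lemma kfun_zero : kfun a b 0 = 1 := by
  simp [kfun]



end Main

lemma rpow_helper (n : ℕ) (x : ℝ) (hx0 : (0:ℝ) < x) :
    (|(2:ℝ)| * x ^ ((2:ℝ) - 1)) * (exp (-(x ^ (2:ℝ))) * (x ^ (2:ℝ)) ^ (((n:ℝ) + 1) / 2 - 1))
      = 2 * (x ^ n * exp (-x ^ 2)) := by
  have e1 : x ^ (2:ℝ) = x ^ (2:ℕ) := by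
    rw [show (2:ℝ) = ((2:ℕ):ℝ) by norm_num, Real.rpow_natCast]
  have e2 : (x ^ (2:ℝ)) ^ (((n:ℝ) + 1) / 2 - 1) = x ^ ((n:ℝ) - 1) := by
    rw [← Real.rpow_mul hx0.le, show (2:ℝ) * (((n:ℝ) + 1) / 2 - 1) = (n:ℝ) - 1 by ring]
  have e3 : x ^ ((2:ℝ) - 1) = x := by
    norm_num
  have e4 : x * x ^ ((n:ℝ) - 1) = x ^ n := by
    rw [show (x : ℝ) * x ^ ((n:ℝ) - 1) = x ^ (1:ℝ) * x ^ ((n:ℝ) - 1) by rw [Real.rpow_one],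
      ← Real.rpow_add hx0, show (1:ℝ) + ((n:ℝ) - 1) = (n:ℝ) by ring, Real.rpow_natCast]
  rw [e2, e3, e1, abs_two]
  calc 2 * x * (exp (-(x ^ (2:ℕ))) * x ^ ((n:ℝ) - 1))
      = 2 * ((x * x ^ ((n:ℝ) - 1)) * exp (-(x ^ (2:ℕ)))) := by ring
    _ = 2 * (x ^ n * exp (-x ^ 2)) := by rw [e4]

lemma gauss_Ioi (n : ℕ) :
    ∫ x in Ioi (0:ℝ), x ^ n * exp (-x ^ 2) = Real.Gamma (((n:ℝ) + 1) / 2) / 2 := by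
  have hs : (0:ℝ) < ((n:ℝ) + 1) / 2 := by positivity
  have key := integral_comp_rpow_Ioi (fun y => exp (-y) * y ^ (((n:ℝ) + 1) / 2 - 1))
    (p := 2) two_ne_zero
  rw [Real.Gamma_eq_integral hs, ← key]
  have : ∀ x ∈ Ioi (0:ℝ),
      (|(2:ℝ)| * x ^ ((2:ℝ) - 1)) •
        ((fun y => exp (-y) * y ^ (((n:ℝ) + 1) / 2 - 1)) (x ^ (2:ℝ)))
      = 2 * (x ^ n * exp (-x ^ 2)) := by
    intro x hx
    rw [smul_eq_mul]
    exact rpow_helper n x hx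
  rw [setIntegral_congr_fun measurableSet_Ioi this, MeasureTheory.integral_const_mul]
  ring

lemma gauss_R (n : ℕ) (hn : Even n) :
    ∫ x : ℝ, x ^ n * exp (-x ^ 2) = Real.Gamma (((n:ℝ) + 1) / 2) := by
  have h := integral_comp_abs (f := fun y => y ^ n * exp (-y ^ 2))
  have h2 : ∀ x : ℝ, |x| ^ n * exp (-|x| ^ 2) = x ^ n * exp (-x ^ 2) := by
    intro x
    rw [hn.pow_abs, sq_abs]
  simp only [h2] at h
  rw [h, gauss_Ioi]
  ring

lemma Gamma_32 : Real.Gamma ((3:ℝ)/2) = Real.sqrt π / 2 := by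
  rw [show (3:ℝ)/2 = 1/2 + 1 by norm_num, Real.Gamma_add_one (by norm_num),
    Real.Gamma_one_half_eq]
  ring

lemma Gamma_52 : Real.Gamma ((5:ℝ)/2) = 3 * Real.sqrt π / 4 := by
  rw [show (5:ℝ)/2 = 3/2 + 1 by norm_num, Real.Gamma_add_one (by norm_num), Gamma_32]
  ring

lemma Gamma_72 : Real.Gamma ((7:ℝ)/2) = 15 * Real.sqrt π / 8 := by
  rw [show (7:ℝ)/2 = 5/2 + 1 by norm_num, Real.Gamma_add_one (by norm_num), Gamma_52]
  ring

lemma integrable_gauss (n : ℕ) : Integrable (fun x : ℝ => x ^ n * exp (-x ^ 2)) := by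
  have h := integrable_rpow_mul_exp_neg_mul_sq (b := 1) one_pos
    (s := (n:ℝ)) (by linarith [Nat.cast_nonneg (α := ℝ) n])
  simpa [Real.rpow_natCast] using h
lemma integral_volumeIoiPow (n : ℕ) (f : ℝ → ℝ) :
    ∫ x : Ioi (0:ℝ), f x ∂(MeasureTheory.Measure.volumeIoiPow n)
      = ∫ x in Ioi (0:ℝ), x ^ n * f x := by
  simp only [MeasureTheory.Measure.volumeIoiPow, ENNReal.ofReal]
  rw [integral_withDensity_eq_integral_smul
      (f := fun r : Ioi (0:ℝ) => Real.toNNReal (r.1 ^ n))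
      ((measurable_subtype_coe.pow_const _).real_toNNReal) (fun x => f x),
    integral_subtype_comap measurableSet_Ioi fun a => Real.toNNReal (a ^ n) • f a,
    setIntegral_congr_fun measurableSet_Ioi (g := fun x => x ^ n * f x) fun x hx => ?_]
  rw [NNReal.smul_def, Real.coe_toNNReal _ (pow_nonneg hx.out.le _), smul_eq_mul]

def gmono (c : ℕ) : ℝ → ℝ := fun t => t ^ c * exp (-t ^ 2)

def F3 (c0 c1 c2 : ℕ) : (Fin 3 → ℝ) → ℝ := fun z =>
  gmono c0 (z 0) * gmono c1 (z 1) * gmono c2 (z 2)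

lemma F3_eq_prod (c0 c1 c2 : ℕ) :
    F3 c0 c1 c2 = fun z => ∏ i, ![gmono c0, gmono c1, gmono c2] i (z i) := by
  funext z
  rw [Fin.prod_univ_three]
  simp [F3]

lemma integrable_F3 (c0 c1 c2 : ℕ) : Integrable (F3 c0 c1 c2) := by
  rw [F3_eq_prod]
  apply Integrable.fintype_prod (f := fun i => ![gmono c0, gmono c1, gmono c2] i)
  intro i
  fin_cases i <;> exact integrable_gauss _

lemma integral_F3 (c0 c1 c2 : ℕ) :
    ∫ z : Fin 3 → ℝ, F3 c0 c1 c2 z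
      = (∫ t : ℝ, gmono c0 t) * (∫ t : ℝ, gmono c1 t) * (∫ t : ℝ, gmono c2 t) := by
  rw [F3_eq_prod, MeasureTheory.integral_fintype_prod_volume_eq_prod (ι := Fin 3)
    (f := fun i => ![gmono c0, gmono c1, gmono c2] i), Fin.prod_univ_three]
  simp

lemma gmono_int_0 : ∫ t : ℝ, gmono 0 t = Real.sqrt π := by
  have h := gauss_R 0 (Even.zero)
  simp only [gmono]
  rw [h]
  norm_num [Real.Gamma_one_half_eq]

lemma gmono_int_2 : ∫ t : ℝ, gmono 2 t = Real.sqrt π / 2 := by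
  have h := gauss_R 2 (by decide)
  simp only [gmono]
  rw [h, show ((2:ℕ):ℝ) + 1 = 3 by norm_num, Gamma_32]

lemma gmono_int_4 : ∫ t : ℝ, gmono 4 t = 3 * Real.sqrt π / 4 := by
  have h := gauss_R 4 (by decide)
  simp only [gmono]
  rw [h, show ((4:ℕ):ℝ) + 1 = 5 by norm_num, Gamma_52]
def qf : EE → ℝ := fun x => 6 * x 0 ^ 2 - 4 * x 1 ^ 2 - 2 * x 2 ^ 2

lemma full_space_integral :
    ∫ y : EE, (qf y) ^ 2 * exp (-‖y‖ ^ 2) = 28 * π * Real.sqrt π := by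
  have hmp := (EuclideanSpace.volume_preserving_symm_measurableEquiv_toLp (Fin 3)).symm
  have step1 : ∫ y : EE, (qf y) ^ 2 * exp (-‖y‖ ^ 2)
      = ∫ z : Fin 3 → ℝ, (6 * z 0 ^ 2 - 4 * z 1 ^ 2 - 2 * z 2 ^ 2) ^ 2
          * exp (-(z 0 * z 0 + z 1 * z 1 + z 2 * z 2)) := by
    rw [← hmp.integral_comp']
    apply integral_congr_ae (Filter.Eventually.of_forall fun y => ?_)
    have hy : ∀ i : Fin 3, ((MeasurableEquiv.toLp 2 (Fin 3 → ℝ)).symm.symm y) i = y i := fun i => rfl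
    rw [show ((qf ((MeasurableEquiv.toLp 2 (Fin 3 → ℝ)).symm.symm y)) ^ 2
        * exp (-‖(MeasurableEquiv.toLp 2 (Fin 3 → ℝ)).symm.symm y‖ ^ 2))
      = (qf ((MeasurableEquiv.toLp 2 (Fin 3 → ℝ)).symm.symm y)) ^ 2
        * exp (-(((MeasurableEquiv.toLp 2 (Fin 3 → ℝ)).symm.symm y) 0
            * ((MeasurableEquiv.toLp 2 (Fin 3 → ℝ)).symm.symm y) 0
          + ((MeasurableEquiv.toLp 2 (Fin 3 → ℝ)).symm.symm y) 1
            * ((MeasurableEquiv.toLp 2 (Fin 3 → ℝ)).symm.symm y) 1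
          + ((MeasurableEquiv.toLp 2 (Fin 3 → ℝ)).symm.symm y) 2
            * ((MeasurableEquiv.toLp 2 (Fin 3 → ℝ)).symm.symm y) 2)) by rw [norm_sq_eq]]
    simp only [qf, hy]
  rw [step1]
  have step2 : (fun z : Fin 3 → ℝ => (6 * z 0 ^ 2 - 4 * z 1 ^ 2 - 2 * z 2 ^ 2) ^ 2
      * exp (-(z 0 * z 0 + z 1 * z 1 + z 2 * z 2)))
      = fun z => 36 * F3 4 0 0 z + 16 * F3 0 4 0 z + 4 * F3 0 0 4 z
          - 48 * F3 2 2 0 z - 24 * F3 2 0 2 z + 16 * F3 0 2 2 z := by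
    funext z
    rw [show -(z 0 * z 0 + z 1 * z 1 + z 2 * z 2)
        = -(z 0 ^ 2) + (-(z 1 ^ 2) + -(z 2 ^ 2)) by ring, Real.exp_add, Real.exp_add]
    simp only [F3, gmono]
    ring
  rw [step2]
  have i1 := integrable_F3 4 0 0
  have i2 := integrable_F3 0 4 0
  have i3 := integrable_F3 0 0 4
  have i4 := integrable_F3 2 2 0
  have i5 := integrable_F3 2 0 2
  have i6 := integrable_F3 0 2 2
  have I12 : Integrable (fun z : Fin 3 → ℝ => 36 * F3 4 0 0 z + 16 * F3 0 4 0 z) volume :=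
    (i1.const_mul 36).add (i2.const_mul 16)
  have I13 : Integrable (fun z : Fin 3 → ℝ => 36 * F3 4 0 0 z + 16 * F3 0 4 0 z
      + 4 * F3 0 0 4 z) volume := I12.add (i3.const_mul 4)
  have I14 : Integrable (fun z : Fin 3 → ℝ => 36 * F3 4 0 0 z + 16 * F3 0 4 0 z
      + 4 * F3 0 0 4 z - 48 * F3 2 2 0 z) volume := I13.sub (i4.const_mul 48)
  have I15 : Integrable (fun z : Fin 3 → ℝ => 36 * F3 4 0 0 z + 16 * F3 0 4 0 z
      + 4 * F3 0 0 4 z - 48 * F3 2 2 0 z - 24 * F3 2 0 2 z) volume := I14.sub (i5.const_mul 24)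
  rw [integral_add I15 (i6.const_mul 16), integral_sub I14 (i5.const_mul 24),
    integral_sub I13 (i4.const_mul 48), integral_add I12 (i3.const_mul 4),
    integral_add (i1.const_mul 36) (i2.const_mul 16)]
  simp only [MeasureTheory.integral_const_mul, integral_F3, gmono_int_0, gmono_int_2, gmono_int_4]
  rw [show (28:ℝ) * π * Real.sqrt π
    = 28 * Real.sqrt π ^ 2 * Real.sqrt π by rw [Real.sq_sqrt pi_pos.le]]
  ring
open Metric in
lemma sphere_change (F : EE → ℝ) :
    ∫ y : EE, F y
      = ∫ p : Metric.sphere (0:EE) 1 × Ioi (0:ℝ), F ((p.2 : ℝ) • (p.1 : EE))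
          ∂((volume : Measure EE).toSphere.prod (MeasureTheory.Measure.volumeIoiPow 2)) := by
  have hm := (volume : Measure EE).measurePreserving_homeomorphUnitSphereProd
  have hdim : Module.finrank ℝ EE = 3 := finrank_euclideanSpace_fin
  rw [hdim] at hm
  calc ∫ y : EE, F y = ∫ x : ({0}ᶜ : Set EE), F x ∂(Measure.comap Subtype.val volume) := by
        rw [MeasureTheory.integral_subtype_comap (MeasurableSet.compl (measurableSet_singleton 0))
          (fun y => F y), MeasureTheory.restrict_compl_singleton]
    _ = _ := by
        rw [← hm.integral_comp (Homeomorph.measurableEmbedding _)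
          (fun p : Metric.sphere (0:EE) 1 × Ioi (0:ℝ) => F ((p.2 : ℝ) • (p.1 : EE)))]
        refine integral_congr_ae (Filter.Eventually.of_forall fun x => ?_)
        have hx : (x : EE) ≠ 0 := x.2
        simp only [homeomorphUnitSphereProd_apply_fst_coe, homeomorphUnitSphereProd_apply_snd_coe]
        rw [smul_inv_smul₀ (norm_ne_zero_iff.2 hx)]

lemma sphere_int :
    ∫ ω : Metric.sphere (0:EE) 1, (qf ↑ω) ^ 2 ∂((volume : Measure EE).toSphere)
      = 448 * π / 15 := by
  have hs := sphere_change (fun y => (qf y) ^ 2 * exp (-‖y‖ ^ 2))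
  rw [full_space_integral] at hs
  have hpt : ∀ p : Metric.sphere (0:EE) 1 × Ioi (0:ℝ),
      (qf ((p.2:ℝ) • (p.1:EE))) ^ 2 * exp (-‖(p.2:ℝ) • (p.1:EE)‖ ^ 2)
        = (qf ↑p.1) ^ 2 * ((p.2:ℝ) ^ 4 * exp (-(p.2:ℝ) ^ 2)) := by
    rintro ⟨ω, r⟩
    have hω : ‖(ω : EE)‖ = 1 := mem_sphere_zero_iff_norm.mp ω.2
    have h1 : qf ((r:ℝ) • (ω:EE)) = (r:ℝ) ^ 2 * qf ω := by
      simp only [qf, PiLp.smul_apply, smul_eq_mul]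
      ring
    have h2 : ‖(r:ℝ) • (ω:EE)‖ ^ 2 = (r:ℝ) ^ 2 := by
      rw [norm_smul, hω, mul_one, Real.norm_eq_abs, sq_abs]
    rw [h1, h2]
    ring
  rw [integral_congr_ae (Filter.Eventually.of_forall hpt)] at hs
  rw [MeasureTheory.integral_prod_mul (f := fun ω : Metric.sphere (0:EE) 1 => (qf ↑ω) ^ 2)
    (g := fun r : Ioi (0:ℝ) => (r:ℝ) ^ 4 * exp (-(r:ℝ) ^ 2)),
    integral_volumeIoiPow 2 (fun t => t ^ 4 * exp (-t ^ 2))] at hs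
  have hT : ∫ x in Ioi (0:ℝ), x ^ 2 * (x ^ 4 * exp (-x ^ 2)) = 15 * Real.sqrt π / 16 := by
    rw [setIntegral_congr_fun measurableSet_Ioi (g := fun x : ℝ => x ^ 6 * exp (-x ^ 2))
      (fun x _ => by ring), gauss_Ioi 6, show ((6:ℕ):ℝ) + 1 = 7 by norm_num, Gamma_72]
    ring
  rw [hT] at hs
  have hπ : Real.sqrt π ≠ 0 := ne_of_gt (Real.sqrt_pos.mpr pi_pos)
  set S := ∫ ω : Metric.sphere (0:EE) 1, (qf ↑ω) ^ 2 ∂((volume : Measure EE).toSphere) with hS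
  have h2 : Real.sqrt π * (28 * π) = Real.sqrt π * (S * 15 / 16) := by
    linear_combination hs
  have h3 := mul_left_cancel₀ hπ h2
  linarith


lemma sphere_int_final (a b : ℝ) :
    ∫ x : Metric.sphere (0 : EuclideanSpace ℝ (Fin 3)) 1,
      (iteratedFDeriv ℝ 2 (kfun a b) 0 (fun _ => (x : EuclideanSpace ℝ (Fin 3)))) ^ 2
      ∂sphereMeasure = 448 * π / 15 := by
  have hcongr : ∀ x : Metric.sphere (0 : EE) 1,
      (iteratedFDeriv ℝ 2 (kfun a b) 0 (fun _ => (x : EE))) ^ 2 = (qf ↑x) ^ 2 := by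
    intro x
    rw [iFD2_kfun a b (↑x)]
    rfl
  rw [show sphereMeasure = (volume : Measure EE).toSphere from rfl,
    integral_congr_ae (Filter.Eventually.of_forall hcongr), sphere_int]

end

end Aux

theorem stmt19 (a b : ℝ) (H : Matrix (Fin 3) (Fin 3) ℝ)
    (hH : ∀ i j, H i j = iteratedFDeriv ℝ 2 (kfun a b) 0
      ![EuclideanSpace.single i 1, EuclideanSpace.single j 1]) :
    (15 / (8 * Real.pi)) *
        (∫ x : Metric.sphere (0 : EuclideanSpace ℝ (Fin 3)) 1,
          (iteratedFDeriv ℝ 2 (kfun a b) 0 (fun _ => (x : EuclideanSpace ℝ (Fin 3)))) ^ 2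
          ∂sphereMeasure)
      = 56 ∧
    kfun a b 0 *
        (lap (lap (kfun a b)) 0 +
          dotProduct (fun i => gradient (lap (kfun a b)) 0 i)
            (H⁻¹.mulVec fun i => gradient (lap (kfun a b)) 0 i)) -
      (15 / (8 * Real.pi)) *
        (∫ x : Metric.sphere (0 : EuclideanSpace ℝ (Fin 3)) 1,
          (iteratedFDeriv ℝ 2 (kfun a b) 0 (fun _ => (x : EuclideanSpace ℝ (Fin 3)))) ^ 2
          ∂sphereMeasure)
      = 120 * (b - 1) - 56 := by
  have hint : (15 / (8 * Real.pi)) *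
      (∫ x : Metric.sphere (0 : EuclideanSpace ℝ (Fin 3)) 1,
        (iteratedFDeriv ℝ 2 (kfun a b) 0 (fun _ => (x : EuclideanSpace ℝ (Fin 3)))) ^ 2
        ∂sphereMeasure) = 56 := by
    rw [sphere_int_final a b]
    field_simp
    ring
  refine ⟨hint, ?_⟩
  have hg : gradient (lap (kfun a b)) 0 = 0 := by
    unfold gradient
    rw [fderiv_lap_kfun_zero a b]
    exact map_zero _
  have hdot : dotProduct (fun i => gradient (lap (kfun a b)) 0 i)
      (H⁻¹.mulVec fun i => gradient (lap (kfun a b)) 0 i) = 0 := by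
    rw [hg]
    have hz : (fun i => (0 : EuclideanSpace ℝ (Fin 3)) i) = (0 : Fin 3 → ℝ) := by
      funext i; rfl
    rw [hz, zero_dotProduct]
  rw [hint, hdot, kfun_zero a b, lap_lap_kfun_zero a b]
  ring
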